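/- Let T ∈ (0,∞], let λ : [0,T) → ℝ be smooth, and let p : ℝ × [0,T) → ℝ be smooth, 2π-periodic in θ, satisfying ∂p/∂t = ∂²p/∂θ² + p − λ(t). Then the functions t ↦ ∫₀^{2π} p(θ,t) cos θ dθ and t ↦ ∫₀^{2π} p(θ,t) sin θ dθ are constant on [0,T); that is, the Steiner point of the evolving curve is fixed under the flow. -/

import Mathlib

/-!
For `w = cos` and `w = sin`, the moment `t ↦ ∫₀^{2π} p(t,θ) w(θ) dθ` has time derivative
`∫ (p_θθ + p - λ) w` by the equation. Two integrations by parts over a period move both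
`θ`-derivatives onto `w`, and since `w'' + w = 0` and `∫₀^{2π} w = 0` this vanishes.
Rather than differentiating under the integral sign, we integrate the equation in time and swap
the two integrals.
-/

open Real Filter
open scoped ENNReal

/-- The time interval `[0, T)` for `T ∈ (0, ∞]`, as a subset of ℝ. -/
def timeDom (T : ℝ≥0∞) : Set ℝ := {t : ℝ | 0 ≤ t ∧ ENNReal.ofReal t < T}

open MeasureTheory Set Function

theorem Function.Periodic.deriv {f : ℝ → ℝ} {c : ℝ} (h : Periodic f c) :
    Periodic (deriv f) c := fun x => by
  rw [← deriv_comp_add_const, h.funext]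

theorem ContDiff.hasDerivAt_deriv_iteratedDeriv_two {f : ℝ → ℝ} (hf : ContDiff ℝ 2 f)
    (x : ℝ) : HasDerivAt (deriv f) (iteratedDeriv 2 f x) x := by
  rw [iteratedDeriv_succ, iteratedDeriv_one]
  exact ((hf.iterate_deriv' 1 1).differentiable one_ne_zero x).hasDerivAt

/-- Green's identity on a period: the boundary term `f' g - f g'` cancels by periodicity. -/
theorem integral_iteratedDeriv_two_mul_eq_of_periodic {f g : ℝ → ℝ} {L : ℝ}
    (hf : ContDiff ℝ 2 f) (hg : ContDiff ℝ 2 g) (hfL : Periodic f L) (hgL : Periodic g L) :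
    ∫ x in 0..L, iteratedDeriv 2 f x * g x = ∫ x in 0..L, f x * iteratedDeriv 2 g x := by
  have hboundary : ∀ x, HasDerivAt (fun y => deriv f y * g y - f y * deriv g y)
      (iteratedDeriv 2 f x * g x - f x * iteratedDeriv 2 g x) x := fun x => by
    have hf' := (hf.differentiable two_ne_zero x).hasDerivAt
    have hg' := (hg.differentiable two_ne_zero x).hasDerivAt
    exact (((hf.hasDerivAt_deriv_iteratedDeriv_two x).mul hg').sub
      (hf'.mul (hg.hasDerivAt_deriv_iteratedDeriv_two x))).congr_deriv (by ring)
  have hcont : ∀ {h : ℝ → ℝ}, ContDiff ℝ 2 h → Continuous (iteratedDeriv 2 h) :=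
    fun h => h.continuous_iteratedDeriv 2 le_rfl
  have hint₁ : IntervalIntegrable (fun x => iteratedDeriv 2 f x * g x) volume 0 L :=
    ((hcont hf).mul hg.continuous).intervalIntegrable _ _
  have hint₂ : IntervalIntegrable (fun x => f x * iteratedDeriv 2 g x) volume 0 L :=
    (hf.continuous.mul (hcont hg)).intervalIntegrable _ _
  rw [← sub_eq_zero, ← intervalIntegral.integral_sub hint₁ hint₂,
    intervalIntegral.integral_eq_sub_of_hasDerivAt (fun x _ => hboundary x) (hint₁.sub hint₂)]
  have hend : ∀ {h : ℝ → ℝ}, Periodic h L → h L = h 0 := fun hh => by simpa using hh 0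
  rw [hend hfL, hend hgL, hend hfL.deriv, hend hgL.deriv, sub_self]

theorem integral_iteratedDeriv_two_add_sub_mul_eq_zero {f g : ℝ → ℝ} {L : ℝ}
    (hf : ContDiff ℝ 2 f) (hg : ContDiff ℝ 2 g) (hfL : Periodic f L) (hgL : Periodic g L)
    (hg'' : iteratedDeriv 2 g = -g) (hmean : ∫ x in 0..L, g x = 0) (c : ℝ) :
    ∫ x in 0..L, (iteratedDeriv 2 f x + f x - c) * g x = 0 := by
  have hsplit : ∀ x, (iteratedDeriv 2 f x + f x - c) * g x
      = (iteratedDeriv 2 f x * g x - f x * iteratedDeriv 2 g x) - c * g x := fun x => by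
    rw [hg'', Pi.neg_apply]; ring
  have hf₀ := hf.continuous
  have hg₀ := hg.continuous
  have hf₂ := hf.continuous_iteratedDeriv 2 le_rfl
  have hg₂ := hg.continuous_iteratedDeriv 2 le_rfl
  simp only [hsplit]
  rw [intervalIntegral.integral_sub, intervalIntegral.integral_sub,
    integral_iteratedDeriv_two_mul_eq_of_periodic hf hg hfL hgL,
    intervalIntegral.integral_const_mul, hmean]
  · ring
  all_goals exact Continuous.intervalIntegrable (by fun_prop) _ _

theorem DifferentiableWithinAt.hasDerivWithinAt_uncurry_left {E : Type*} [NormedAddCommGroup E]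
    [NormedSpace ℝ E] {f : ℝ → ℝ → E} {s t : Set ℝ} {u θ : ℝ} (hθ : θ ∈ t)
    (hf : DifferentiableWithinAt ℝ (uncurry f) (s ×ˢ t) (u, θ)) :
    HasDerivWithinAt (f · θ) (fderivWithin ℝ (uncurry f) (s ×ˢ t) (u, θ) (1, 0)) s u :=
  (hf.hasFDerivWithinAt.comp_hasDerivWithinAt u
    ((hasDerivWithinAt_id u s).prodMk (hasDerivWithinAt_const u s θ))
      fun _ hv => mk_mem_prod hv hθ :)

theorem intervalIntegral_integral_swap_of_continuousOn {E : Type*} [NormedAddCommGroup E]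
    [NormedSpace ℝ E] {f : ℝ → ℝ → E} {a b c d : ℝ} (hab : a ≤ b) (hcd : c ≤ d)
    (hf : ContinuousOn (uncurry f) (Icc a b ×ˢ Icc c d)) :
    ∫ x in a..b, ∫ y in c..d, f x y = ∫ y in c..d, ∫ x in a..b, f x y := by
  simp only [intervalIntegral.integral_of_le hab, intervalIntegral.integral_of_le hcd]
  refine integral_integral_swap ?_
  rw [Measure.prod_restrict, ← Measure.volume_eq_prod]
  exact (hf.integrableOn_compact (isCompact_Icc.prod isCompact_Icc)).mono_set
    (prod_mono Ioc_subset_Icc_self Ioc_subset_Icc_self)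

theorem intervalIntegral_eq_of_integral_derivWithin_eq_zero {f : ℝ → ℝ → ℝ} {D : Set ℝ}
    {a b : ℝ} (hab : a ≤ b) (hDc : D.OrdConnected) (hDu : UniqueDiffOn ℝ D)
    (hf : ContDiffOn ℝ 1 (uncurry f) (D ×ˢ univ))
    (h₀ : ∀ u ∈ D, ∫ θ in a..b, derivWithin (f · θ) D u = 0) {s t : ℝ} (hs : s ∈ D)
    (ht : t ∈ D) : ∫ θ in a..b, f s θ = ∫ θ in a..b, f t θ := by
  let G : ℝ → ℝ → ℝ := fun u θ => fderivWithin ℝ (uncurry f) (D ×ˢ univ) (u, θ) (1, 0)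
  have hG : ContinuousOn (uncurry G) (D ×ˢ univ) :=
    (hf.continuousOn_fderivWithin (hDu.prod uniqueDiffOn_univ) le_rfl).clm_apply
      continuousOn_const
  have hfG : ∀ u ∈ D, ∀ θ, HasDerivWithinAt (f · θ) (G u θ) D u := fun u hu θ =>
    (hf.differentiableOn one_ne_zero (u, θ) ⟨hu, trivial⟩).hasDerivWithinAt_uncurry_left
      trivial
  have hG₀ : ∀ u ∈ D, ∫ θ in a..b, G u θ = 0 := fun u hu => by
    simpa only [(hfG u hu _).derivWithin (hDu u hu)] using h₀ u hu
  have hfc : ∀ u ∈ D, Continuous (f u) := fun u hu =>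
    continuousOn_univ.1 <| hf.continuousOn.comp
      (continuous_const.prodMk continuous_id).continuousOn fun θ _ => ⟨hu, trivial⟩
  wlog hst : s ≤ t generalizing s t
  · exact (this ht hs (le_of_not_ge hst)).symm
  have hsub : Icc s t ⊆ D := hDc.out hs ht
  have hftc : ∀ θ, ∫ u in s..t, G u θ = f t θ - f s θ := fun θ =>
    intervalIntegral.integral_eq_sub_of_hasDeriv_right_of_le hst
      (fun u hu => ((hfG u (hsub hu) θ).continuousWithinAt.mono hsub))
      (fun u hu => ((hfG u (hsub (Ioo_subset_Icc_self hu)) θ).hasDerivAt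
        (mem_of_superset (Icc_mem_nhds hu.1 hu.2) hsub)).hasDerivWithinAt)
      (ContinuousOn.intervalIntegrable (by
        rw [uIcc_of_le hst]
        exact hG.comp (continuous_id.prodMk continuous_const).continuousOn
          fun u hu => ⟨hsub hu, trivial⟩))
  have hswap := intervalIntegral_integral_swap_of_continuousOn hab hst (f := fun θ u => G u θ)
    (hG.comp continuous_swap.continuousOn fun z hz => ⟨hsub hz.2, trivial⟩)
  refine (sub_eq_zero.1 ?_).symm
  rw [← intervalIntegral.integral_sub ((hfc t ht).intervalIntegrable _ _)
    ((hfc s hs).intervalIntegrable _ _)]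
  calc ∫ θ in a..b, f t θ - f s θ
      = ∫ θ in a..b, ∫ u in s..t, G u θ := by simp only [hftc]
    _ = ∫ u in s..t, ∫ θ in a..b, G u θ := hswap
    _ = 0 := by
      rw [intervalIntegral.integral_congr fun u hu => hG₀ u (hsub (uIcc_of_le hst ▸ hu))]
      exact intervalIntegral.integral_zero

theorem intervalIntegral_mul_eq_of_pde {p : ℝ → ℝ → ℝ} {lam w : ℝ → ℝ} {D : Set ℝ} {L : ℝ}
    (hL : 0 ≤ L) (hDc : D.OrdConnected) (hDu : UniqueDiffOn ℝ D)
    (hp : ContDiffOn ℝ 2 (uncurry p) (D ×ˢ univ)) (hper : ∀ t ∈ D, Periodic (p t) L)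
    (hpde : ∀ t ∈ D, ∀ θ, derivWithin (p · θ) D t = iteratedDeriv 2 (p t) θ + p t θ - lam t)
    (hw : ContDiff ℝ 2 w) (hwL : Periodic w L) (hw'' : iteratedDeriv 2 w = -w)
    (hw₀ : ∫ θ in 0..L, w θ = 0) {s t : ℝ} (hs : s ∈ D) (ht : t ∈ D) :
    ∫ θ in 0..L, p s θ * w θ = ∫ θ in 0..L, p t θ * w θ := by
  have hpw : ContDiffOn ℝ 1 (uncurry fun u θ => p u θ * w θ) (D ×ˢ univ) :=
    (hp.mul (hw.comp contDiff_snd).contDiffOn).of_le one_le_two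
  refine intervalIntegral_eq_of_integral_derivWithin_eq_zero hL hDc hDu hpw
    (fun u hu => ?_) hs ht
  have hslice : ContDiff ℝ 2 (p u) := contDiffOn_univ.1 <|
    hp.comp (contDiff_const.prodMk contDiff_id).contDiffOn fun θ _ => ⟨hu, trivial⟩
  have hderiv : ∀ θ, derivWithin (fun v => p v θ * w θ) D u
      = (iteratedDeriv 2 (p u) θ + p u θ - lam u) * w θ := fun θ => by
    rw [← hpde u hu θ]
    exact derivWithin_mul_const ((hp.differentiableOn two_ne_zero (u, θ) ⟨hu, trivial⟩
      ).hasDerivWithinAt_uncurry_left (mem_univ θ)).differentiableWithinAt _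
  simp only [hderiv]
  exact integral_iteratedDeriv_two_add_sub_mul_eq_zero hslice hw (hper u hu) hwL hw'' hw₀ _

theorem ordConnected_timeDom (T : ℝ≥0∞) : (timeDom T).OrdConnected :=
  ⟨fun _ hs _ ht _ hu => ⟨hs.1.trans hu.1, (ENNReal.ofReal_le_ofReal hu.2).trans_lt ht.2⟩⟩

theorem uniqueDiffOn_timeDom {T : ℝ≥0∞} (hT : 0 < T) : UniqueDiffOn ℝ (timeDom T) := by
  obtain ⟨r, -, hr₀, hrT⟩ := ENNReal.lt_iff_exists_real_btwn.1 hT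
  have hr : 0 < r := ENNReal.ofReal_pos.1 hr₀
  have hsub : Ioo 0 r ⊆ timeDom T := fun u hu =>
    ⟨hu.1.le, (ENNReal.ofReal_le_ofReal hu.2.le).trans_lt hrT⟩
  exact uniqueDiffOn_convex (ordConnected_timeDom T).convex
    ⟨r / 2, mem_interior_iff_mem_nhds.2 <|
      mem_of_superset (Ioo_mem_nhds (half_pos hr) (half_lt_self hr)) hsub⟩

theorem steiner_point_fixed_general
    (T : ℝ≥0∞) (hT : 0 < T)
    (lam : ℝ → ℝ) (p : ℝ → ℝ → ℝ)
    (hp : ContDiffOn ℝ (⊤ : ℕ∞) (Function.uncurry p) (timeDom T ×ˢ (Set.univ : Set ℝ)))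
    (hper : ∀ t ∈ timeDom T, Function.Periodic (p t) (2 * π))
    (hpde : ∀ t ∈ timeDom T, ∀ θ : ℝ,
      derivWithin (fun s => p s θ) (timeDom T) t
        = iteratedDeriv 2 (p t) θ + p t θ - lam t) :
    (∀ s ∈ timeDom T, ∀ t ∈ timeDom T,
      (∫ θ in (0:ℝ)..(2 * π), p s θ * Real.cos θ)
        = ∫ θ in (0:ℝ)..(2 * π), p t θ * Real.cos θ) ∧
    (∀ s ∈ timeDom T, ∀ t ∈ timeDom T,
      (∫ θ in (0:ℝ)..(2 * π), p s θ * Real.sin θ)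
        = ∫ θ in (0:ℝ)..(2 * π), p t θ * Real.sin θ) := by
  have hp₂ : ContDiffOn ℝ 2 (uncurry p) (timeDom T ×ˢ univ) :=
    hp.of_le (WithTop.coe_le_coe.2 le_top)
  have hDc := ordConnected_timeDom T
  have hDu := uniqueDiffOn_timeDom hT
  refine ⟨fun s hs t ht => ?_, fun s hs t ht => ?_⟩
  · exact intervalIntegral_mul_eq_of_pde two_pi_pos.le hDc hDu hp₂ hper hpde contDiff_cos
      cos_periodic (by ext θ; simp) (by simp [integral_cos]) hs ht
  · exact intervalIntegral_mul_eq_of_pde two_pi_pos.le hDc hDu hp₂ hper hpde contDiff_sin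
      sin_periodic (by ext θ; simp) (by simp [integral_sin]) hs ht

theorem steiner_point_fixed
    (T : ℝ≥0∞) (hT : 0 < T)
    (lam : ℝ → ℝ) (p : ℝ → ℝ → ℝ)
    (hlam : ContDiffOn ℝ (⊤ : ℕ∞) lam (timeDom T))
    (hp : ContDiffOn ℝ (⊤ : ℕ∞) (Function.uncurry p) (timeDom T ×ˢ (Set.univ : Set ℝ)))
    (hper : ∀ t ∈ timeDom T, Function.Periodic (p t) (2 * π))
    (hpde : ∀ t ∈ timeDom T, ∀ θ : ℝ,
      derivWithin (fun s => p s θ) (timeDom T) t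
        = iteratedDeriv 2 (p t) θ + p t θ - lam t) :
    (∀ s ∈ timeDom T, ∀ t ∈ timeDom T,
      (∫ θ in (0:ℝ)..(2 * π), p s θ * Real.cos θ)
        = ∫ θ in (0:ℝ)..(2 * π), p t θ * Real.cos θ) ∧
    (∀ s ∈ timeDom T, ∀ t ∈ timeDom T,
      (∫ θ in (0:ℝ)..(2 * π), p s θ * Real.sin θ)
        = ∫ θ in (0:ℝ)..(2 * π), p t θ * Real.sin θ) :=
  steiner_point_fixed_general T hT lam p hp hper hpde
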